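/- With κ_π(T_1,…,T_n) := Σ_{σ ∈ BNC(χ), σ ≤ π} φ_σ(T_1,…,T_n) μ_{BNC}(σ,π), the cumulant functional factors over blocks: κ_π(T_1,…,T_n) = Π_{t=1}^k κ_{π|_{V_t}}(T_{k_{t,1}},…,T_{k_{t,m_t}}), where V_t = {k_{t,1}<⋯<k_{t,m_t}} are the blocks of π, and moreover φ(T_1⋯T_n) = Σ_{π ∈ BNC(χ)} κ_π(T_1,…,T_n). -/

import Mathlib

/-!
Restricting partitions `ρ ≤ π` to the blocks of `π` identifies each interval `[σ, π]` of
`BNC(χ)` with the product over the blocks `V` of `π` of the intervals `[σ|_V, 1_V]` of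
`BNC(χ|_V)`. Restriction preserves bi-non-crossingness because the spine order of `χ|_V` is the
spine order of `χ` restricted to `V`; conversely, non-crossingness of a refinement of the
non-crossing `π` can be checked inside each block of `π`. Moments `φ_σ` factor over the blocks
of `π`, and the Möbius function, being determined by its recursion on intervals, factors as
`μ(σ, π) = ∏_V μ(σ|_V, 1_V)`; summing over the product of intervals factors `κ_π`. The moment
formula is Möbius inversion: `∑_π κ_π = ∑_σ φ_σ ∑_{π ≥ σ} μ(σ, π) = φ_{1_n}`.
-/

open scoped BigOperators

def permAct {n : ℕ} (s : Equiv.Perm (Fin n)) (π : Setoid (Fin n)) : Setoid (Fin n) :=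
  Setoid.comap (fun x => s⁻¹ x) π

def IsNonCrossing {n : ℕ} (π : Setoid (Fin n)) : Prop :=
  ∀ a b c d : Fin n, a < b → b < c → c < d → π.r a c → π.r b d → π.r a b

def leftF {n : ℕ} (χ : Fin n → Bool) : Finset (Fin n) :=
  Finset.univ.filter fun i => χ i = true

def rightF {n : ℕ} (χ : Fin n → Bool) : Finset (Fin n) :=
  Finset.univ.filter fun i => χ i = false

theorem card_leftF_add_rightF {n : ℕ} (χ : Fin n → Bool) :
    (leftF χ).card + (rightF χ).card = n := by
  classical
  have h := Finset.card_filter_add_card_filter_not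
    (s := (Finset.univ : Finset (Fin n))) (p := fun i => χ i = true)
  simpa [leftF, rightF, Bool.not_eq_true] using h

noncomputable def eqLeft {n : ℕ} (χ : Fin n → Bool) :
    Fin (leftF χ).card ≃ {x : Fin n // χ x = true} :=
  ((leftF χ).orderIsoOfFin rfl).toEquiv.trans
    (Equiv.subtypeEquivRight (fun x => by simp [leftF]))

noncomputable def eqRight {n : ℕ} (χ : Fin n → Bool) :
    Fin (rightF χ).card ≃ {x : Fin n // ¬ χ x = true} :=
  (Fin.revPerm.trans ((rightF χ).orderIsoOfFin rfl).toEquiv).trans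
    (Equiv.subtypeEquivRight (fun x => by simp [rightF]))

noncomputable def sPerm {n : ℕ} (χ : Fin n → Bool) : Equiv.Perm (Fin n) :=
  (((finCongr (card_leftF_add_rightF χ).symm).trans finSumFinEquiv.symm).trans
    ((eqLeft χ).sumCongr (eqRight χ))).trans (Equiv.sumCompl fun i => χ i = true)

def BNC {n : ℕ} (χ : Fin n → Bool) : Set (Setoid (Fin n)) :=
  {π | ∃ σ, IsNonCrossing σ ∧ π = permAct (sPerm χ) σ}

noncomputable def blockFinset {n : ℕ} (V : Set (Fin n)) : Finset (Fin n) :=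
  V.toFinite.toFinset

noncomputable def blockCard {n : ℕ} (V : Set (Fin n)) : ℕ := (blockFinset V).card

noncomputable def enum {n : ℕ} (V : Set (Fin n)) : Fin (blockCard V) → Fin n :=
  fun i => (blockFinset V).orderEmbOfFin rfl i

/-- `φ_π(T_1,…,T_n) = Π_{V ∈ π} φ(T_{k_1}⋯T_{k_m})`, the product over blocks
`V = {k_1<⋯<k_m}` of the moments along each block. -/
noncomputable def phiP {A : Type*} [Ring A] [Algebra ℂ A] {n : ℕ}
    (φ : A →ₗ[ℂ] ℂ) (π : Setoid (Fin n)) (T : Fin n → A) : ℂ :=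
  ∏ᶠ V ∈ Setoid.classes π,
    φ (List.ofFn (fun i : Fin (blockCard V) => T (enum V i))).prod

/-- `κ_π(T_1,…,T_n) = Σ_{σ ∈ BNC(χ), σ ≤ π} φ_σ(T_1,…,T_n) μ_BNC(σ,π)`. -/
noncomputable def kappaP {A : Type*} [Ring A] [Algebra ℂ A] {n : ℕ}
    (φ : A →ₗ[ℂ] ℂ)
    (μ : ∀ m : ℕ, (Fin m → Bool) → Setoid (Fin m) → Setoid (Fin m) → ℂ)
    (χ : Fin n → Bool) (π : Setoid (Fin n)) (T : Fin n → A) : ℂ :=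
  ∑ᶠ σ ∈ {σ | σ ∈ BNC χ ∧ σ ≤ π}, phiP φ σ T * μ n χ σ π

open scoped Classical

instance Setoid.instFinite {α : Type*} [Finite α] : Finite (Setoid α) :=
  Finite.of_injective (fun r : Setoid α => (r : α → α → Prop)) fun _ _ => Setoid.eq_iff_rel_eq.2

noncomputable instance Setoid.instFintype {α : Type*} [Finite α] : Fintype (Setoid α) :=
  Fintype.ofFinite _

theorem finsum_mem_setOf_eq_sum_filter {α M : Type*} [Fintype α] [AddCommMonoid M]
    (p : α → Prop) [DecidablePred p] (f : α → M) :
    ∑ᶠ x ∈ {x | p x}, f x = ∑ x with p x, f x := by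
  rw [finsum_mem_eq_toFinset_sum, Set.toFinset_ofPred]

theorem finprod_mem_classes_eq_prod {α M : Type*} [Fintype α] [CommMonoid M] (π : Setoid α)
    (f : Set α → M) : ∏ᶠ V ∈ π.classes, f V = ∏ V : π.classes, f V := by
  rw [← finprod_set_coe_eq_finprod_mem, finprod_eq_prod_of_fintype]

theorem eq_of_forall_sum_Icc_eq {α M : Type*} [PartialOrder α] [Fintype α]
    [AddCancelCommMonoid M] {S : Set α} {π : α} {f g : α → M}
    (h : ∀ σ ∈ S, σ ≤ π →
      ∑ ρ with ρ ∈ S ∧ σ ≤ ρ ∧ ρ ≤ π, f ρ = ∑ ρ with ρ ∈ S ∧ σ ≤ ρ ∧ ρ ≤ π, g ρ)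
    {σ : α} (hσ : σ ∈ S) (hσπ : σ ≤ π) : f σ = g σ := by
  induction σ using WellFoundedGT.induction with
  | _ σ ih =>
    have hmem : σ ∈ ({ρ | ρ ∈ S ∧ σ ≤ ρ ∧ ρ ≤ π} : Finset α) := by simp [hσ, hσπ]
    have hrest := Finset.sum_congr (s₁ := ({ρ | ρ ∈ S ∧ σ ≤ ρ ∧ ρ ≤ π} : Finset α).erase σ) rfl
      fun ρ hρ => by
        simp only [Finset.mem_erase, Finset.mem_filter, Finset.mem_univ, true_and] at hρ
        exact ih ρ (lt_of_le_of_ne hρ.2.2.1 (Ne.symm hρ.1)) hρ.2.1 hρ.2.2.2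
    have hsum := h σ hσ hσπ
    rw [← Finset.add_sum_erase _ _ hmem, ← Finset.add_sum_erase _ _ hmem, hrest] at hsum
    exact add_right_cancel hsum

theorem Setoid.image_classes_comap {α β : Type*} {σ : Setoid α} {e : β → α} {V : Set α}
    (he : Set.range e = V) (hsat : ∀ x y, σ x y → x ∈ V → y ∈ V) :
    (e '' ·) '' (σ.comap e).classes = {C ∈ σ.classes | C ⊆ V} := by
  subst he
  have himage : ∀ i, e '' {j | σ (e j) (e i)} = {y | σ y (e i)} := fun i => by
    ext y
    refine ⟨?_, fun hy => ?_⟩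
    · rintro ⟨j, hj, rfl⟩
      exact hj
    · obtain ⟨j, rfl⟩ := hsat _ _ (σ.symm' hy) ⟨i, rfl⟩
      exact ⟨j, hy, rfl⟩
  ext C
  constructor
  · rintro ⟨W, ⟨i, rfl⟩, rfl⟩
    refine ⟨?_, Set.image_subset_range _ _⟩
    change e '' {j | σ (e j) (e i)} ∈ σ.classes
    rw [himage]
    exact σ.mem_classes (e i)
  · rintro ⟨⟨x, rfl⟩, hsub⟩
    obtain ⟨i, rfl⟩ := hsub (σ.refl' x)
    exact ⟨_, (σ.comap e).mem_classes i, himage i⟩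

theorem Setoid.classes_eq_biUnion {α : Type*} {σ π : Setoid α} (hσ : σ ≤ π) :
    σ.classes = ⋃ V ∈ π.classes, {C ∈ σ.classes | C ⊆ V} := by
  ext C
  simp only [Set.mem_iUnion, Set.mem_ofPred_eq, exists_prop]
  refine ⟨fun hC => ?_, fun ⟨_, _, hC, _⟩ => hC⟩
  obtain ⟨x, rfl⟩ := hC
  exact ⟨_, π.mem_classes x, σ.mem_classes x, fun y hy => hσ hy⟩

theorem Setoid.pairwiseDisjoint_classes_subset {α : Type*} (σ π : Setoid α) :
    π.classes.PairwiseDisjoint fun V => {C ∈ σ.classes | C ⊆ V} := by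
  intro V hV V' hV' hne
  refine Set.disjoint_left.2 fun C hC hC' => hne ?_
  obtain ⟨x, hx⟩ := Setoid.nonempty_of_mem_partition (Setoid.isPartition_classes σ) hC.1
  exact Setoid.eq_of_mem_classes hV (hC.2 hx) hV' (hC'.2 hx)

theorem Setoid.mem_of_rel_of_mem_classes {α : Type*} {π : Setoid α} {V : Set α}
    (hV : V ∈ π.classes) {x y : α} (hxy : π x y) (hx : x ∈ V) : y ∈ V := by
  obtain ⟨z, rfl⟩ := hV
  exact π.trans' (π.symm' hxy) hx

variable {n : ℕ}

section Enum

variable {V : Set (Fin n)}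

theorem range_enum : Set.range (enum V) = V := by
  change Set.range ((blockFinset V).orderEmbOfFin rfl) = V
  rw [Finset.range_orderEmbOfFin, blockFinset, Set.Finite.coe_toFinset]

theorem enum_strictMono : StrictMono (enum V) :=
  ((blockFinset V).orderEmbOfFin rfl).strictMono

theorem enum_injective : Function.Injective (enum V) :=
  enum_strictMono.injective

theorem enum_mem (i : Fin (blockCard V)) : enum V i ∈ V :=
  range_enum.subset (Set.mem_range_self i)

theorem exists_enum_eq {x : Fin n} (hx : x ∈ V) : ∃ i, enum V i = x :=
  range_enum.symm.subset hx

theorem ofFn_comp_enum_eq {A : Type*} {m : ℕ} {f : Fin m → Fin n} (hf : StrictMono f)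
    (hV : Set.range f = V) (T : Fin n → A) :
    List.ofFn (fun i => T (enum V i)) = List.ofFn (fun i => T (f i)) := by
  have h : List.ofFn (enum V) = List.ofFn f :=
    enum_strictMono.sortedLT_ofFn.eq_of_mem_iff hf.sortedLT_ofFn fun x => by
      simp only [List.mem_ofFn', range_enum, hV]
  simpa only [List.map_ofFn, Function.comp_def] using congrArg (List.map T) h

end Enum

theorem finprod_classes_eq_finprod_classes_comap_enum {M : Type*} [CommMonoid M]
    {π σ : Setoid (Fin n)} (hσ : σ ≤ π) (f : Set (Fin n) → M) :
    ∏ᶠ C ∈ σ.classes, f C =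
      ∏ᶠ V ∈ π.classes, ∏ᶠ W ∈ (σ.comap (enum V)).classes, f (enum V '' W) := by
  rw [Setoid.classes_eq_biUnion hσ, finprod_mem_biUnion (σ.pairwiseDisjoint_classes_subset π)
    (Set.toFinite _) fun _ _ => Set.toFinite _]
  refine finprod_mem_congr rfl fun V hV => ?_
  have hsat : ∀ x y, σ x y → x ∈ V → y ∈ V := fun x y hxy =>
    Setoid.mem_of_rel_of_mem_classes hV (hσ hxy)
  rw [← Setoid.image_classes_comap range_enum hsat,
    finprod_mem_image (Set.image_injective.2 enum_injective).injOn]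

theorem phiP_eq_finprod_comap_enum {A : Type*} [Ring A] [Algebra ℂ A] (φ : A →ₗ[ℂ] ℂ)
    {π σ : Setoid (Fin n)} (hσ : σ ≤ π) (T : Fin n → A) :
    phiP φ σ T =
      ∏ᶠ V ∈ π.classes, phiP φ (σ.comap (enum V)) (fun i => T (enum V i)) := by
  rw [phiP, finprod_classes_eq_finprod_classes_comap_enum hσ]
  exact finprod_mem_congr rfl fun V _ => finprod_mem_congr rfl fun W _ => by
    rw [ofFn_comp_enum_eq (enum_strictMono.comp enum_strictMono)
      (by rw [Set.range_comp, range_enum])]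
    rfl

section Restriction

variable {π σ ρ : Setoid (Fin n)}

theorem comap_enum_eq_top {V : Set (Fin n)} (hV : V ∈ π.classes) : π.comap (enum V) = ⊤ := by
  ext i j
  exact iff_of_true (π.rel_iff_exists_classes.2 ⟨V, hV, enum_mem i, enum_mem j⟩) trivial

theorem le_iff_forall_comap_enum_le (hσ : σ ≤ π) :
    σ ≤ ρ ↔ ∀ V ∈ π.classes, σ.comap (enum V) ≤ ρ.comap (enum V) := by
  refine ⟨fun h V _ i j hij => h hij, fun h x y hxy => ?_⟩
  obtain ⟨i, hi⟩ := exists_enum_eq (V := {z | π z x}) (π.refl' x)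
  obtain ⟨j, hj⟩ := exists_enum_eq (V := {z | π z x}) (π.symm' (hσ hxy))
  have hij : σ.comap (enum _) i j := by rwa [Setoid.comap_rel, hi, hj]
  simpa only [Setoid.comap_rel, hi, hj] using h _ (π.mem_classes x) hij

theorem eq_of_forall_comap_enum_eq (hσ : σ ≤ π) (hρ : ρ ≤ π)
    (h : ∀ V ∈ π.classes, σ.comap (enum V) = ρ.comap (enum V)) : σ = ρ :=
  le_antisymm ((le_iff_forall_comap_enum_le hσ).2 fun V hV => (h V hV).le)
    ((le_iff_forall_comap_enum_le hρ).2 fun V hV => (h V hV).ge)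

theorem eq_iff_forall_comap_enum_eq_top (hσ : σ ≤ π) :
    σ = π ↔ ∀ V ∈ π.classes, σ.comap (enum V) = ⊤ := by
  refine ⟨by rintro rfl V hV; exact comap_enum_eq_top hV, fun h => ?_⟩
  exact eq_of_forall_comap_enum_eq hσ le_rfl fun V hV => by rw [h V hV, comap_enum_eq_top hV]

def glueBlocks (π : Setoid (Fin n)) (p : ∀ V : π.classes, Setoid (Fin (blockCard V.1))) :
    Setoid (Fin n) where
  r x y := ∃ (V : π.classes) (i j : Fin (blockCard V.1)), enum V.1 i = x ∧ enum V.1 j = y ∧ p V i j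
  iseqv := by
    refine ⟨fun x => ?_, fun ⟨V, i, j, hi, hj, h⟩ => ⟨V, j, i, hj, hi, (p V).symm' h⟩, ?_⟩
    · obtain ⟨i, hi⟩ := exists_enum_eq (V := {z | π z x}) (π.refl' x)
      exact ⟨⟨_, π.mem_classes x⟩, i, i, hi, hi, Setoid.refl' _ i⟩
    · rintro x y z ⟨V, i, j, hi, rfl, h⟩ ⟨V', j', k, hj', hk, h'⟩
      obtain rfl : V = V' := Subtype.ext <|
        Setoid.eq_of_mem_classes V.2 (enum_mem j) V'.2 (hj' ▸ enum_mem j')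
      obtain rfl : j' = j := enum_injective hj'
      exact ⟨V, i, k, hi, hk, (p V).trans' h h'⟩

variable {p : ∀ V : π.classes, Setoid (Fin (blockCard V.1))}

theorem glueBlocks_le : glueBlocks π p ≤ π := by
  rintro x y ⟨V, i, j, rfl, rfl, -⟩
  exact π.rel_iff_exists_classes.2 ⟨V, V.2, enum_mem i, enum_mem j⟩

theorem comap_enum_glueBlocks (V : π.classes) : (glueBlocks π p).comap (enum V.1) = p V := by
  ext i j
  refine ⟨fun ⟨V', i', j', hi, hj, h⟩ => ?_, fun h => ⟨V, i, j, rfl, rfl, h⟩⟩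
  obtain rfl : V' = V := Subtype.ext <|
    Setoid.eq_of_mem_classes V'.2 (hi ▸ enum_mem i') V.2 (enum_mem i)
  rwa [enum_injective hi, enum_injective hj] at h

end Restriction

section Spine

variable {χ : Fin n → Bool}

/-- The order in which `sPerm χ` lists `Fin n`: first the points with `χ = true` increasingly,
then those with `χ = false` decreasingly. -/
def SpineLT (χ : Fin n → Bool) (x y : Fin n) : Prop :=
  χ x = true ∧ χ y = false ∨ χ x = true ∧ χ y = true ∧ x < y ∨
    χ x = false ∧ χ y = false ∧ y < x

theorem SpineLT.asymm {x y : Fin n} (h : SpineLT χ x y) : ¬SpineLT χ y x := by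
  unfold SpineLT at *
  rcases h with ⟨hx, hy⟩ | ⟨hx, hy, hlt⟩ | ⟨hx, hy, hlt⟩
  · simp [hx, hy]
  · simp [hx, hy, lt_asymm hlt]
  · simp [hx, hy, lt_asymm hlt]

theorem spineLT_comp {m : ℕ} {f : Fin m → Fin n} (hf : StrictMono f) {i j : Fin m} :
    SpineLT (fun k => χ (f k)) i j ↔ SpineLT χ (f i) (f j) := by
  simp only [SpineLT, hf.lt_iff_lt]

theorem sPerm_apply_of_lt {k : Fin n} (hk : (k : ℕ) < (leftF χ).card) :
    sPerm χ k = (leftF χ).orderEmbOfFin rfl ⟨k, hk⟩ := by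
  have h : finCongr (card_leftF_add_rightF χ).symm k = Fin.castAdd (rightF χ).card ⟨k, hk⟩ :=
    Fin.ext rfl
  simp only [sPerm, Equiv.trans_apply, h, finSumFinEquiv_symm_apply_castAdd,
    Equiv.sumCongr_apply, Sum.map_inl, Equiv.sumCompl_apply_inl]
  rfl

theorem sPerm_apply_of_le {k : Fin n} (hk : (leftF χ).card ≤ k) :
    sPerm χ k = (rightF χ).orderEmbOfFin rfl
      (Fin.rev ⟨k - (leftF χ).card, by have := card_leftF_add_rightF χ; omega⟩) := by
  have h : finCongr (card_leftF_add_rightF χ).symm k = Fin.natAdd (leftF χ).card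
      ⟨k - (leftF χ).card, by have := card_leftF_add_rightF χ; omega⟩ := by
    ext
    simp only [finCongr_apply, Fin.val_cast, Fin.val_natAdd]
    omega
  simp only [sPerm, Equiv.trans_apply, h, finSumFinEquiv_symm_apply_natAdd,
    Equiv.sumCongr_apply, Sum.map_inr, Equiv.sumCompl_apply_inr]
  rfl

theorem χ_sPerm_of_lt {k : Fin n} (hk : (k : ℕ) < (leftF χ).card) : χ (sPerm χ k) = true := by
  rw [sPerm_apply_of_lt hk]
  simpa [leftF] using Finset.orderEmbOfFin_mem (leftF χ) rfl ⟨k, hk⟩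

theorem χ_sPerm_of_le {k : Fin n} (hk : (leftF χ).card ≤ k) : χ (sPerm χ k) = false := by
  rw [sPerm_apply_of_le hk]
  simpa [rightF] using Finset.orderEmbOfFin_mem (rightF χ) rfl _

theorem spineLT_sPerm_of_lt {i j : Fin n} (hij : i < j) :
    SpineLT χ (sPerm χ i) (sPerm χ j) := by
  have hij' : (i : ℕ) < j := hij
  by_cases hj : (j : ℕ) < (leftF χ).card
  · have hi : (i : ℕ) < (leftF χ).card := hij'.trans hj
    refine Or.inr (Or.inl ⟨χ_sPerm_of_lt hi, χ_sPerm_of_lt hj, ?_⟩)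
    rw [sPerm_apply_of_lt hi, sPerm_apply_of_lt hj]
    exact ((leftF χ).orderEmbOfFin rfl).strictMono hij
  by_cases hi : (i : ℕ) < (leftF χ).card
  · exact Or.inl ⟨χ_sPerm_of_lt hi, χ_sPerm_of_le (not_lt.1 hj)⟩
  · refine Or.inr (Or.inr ⟨χ_sPerm_of_le (not_lt.1 hi), χ_sPerm_of_le (not_lt.1 hj), ?_⟩)
    rw [sPerm_apply_of_le (not_lt.1 hi), sPerm_apply_of_le (not_lt.1 hj)]
    refine ((rightF χ).orderEmbOfFin rfl).strictMono (Fin.rev_lt_rev.2 ?_)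
    simp only [Fin.mk_lt_mk]
    omega

theorem lt_iff_spineLT_sPerm {i j : Fin n} : i < j ↔ SpineLT χ (sPerm χ i) (sPerm χ j) := by
  refine ⟨spineLT_sPerm_of_lt, fun h => ?_⟩
  rcases lt_trichotomy i j with hij | rfl | hji
  · exact hij
  · exact absurd h h.asymm
  · exact absurd (spineLT_sPerm_of_lt hji) h.asymm

end Spine

section NonCrossing

theorem IsNonCrossing.comap {m : ℕ} {σ : Setoid (Fin n)} (hσ : IsNonCrossing σ)
    {f : Fin m → Fin n} (hf : StrictMono f) : IsNonCrossing (σ.comap f) :=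
  fun _ _ _ _ hab hbc hcd hac hbd => hσ _ _ _ _ (hf hab) (hf hbc) (hf hcd) hac hbd

theorem IsNonCrossing.of_local {ρ τ : Setoid (Fin n)} (hτ : IsNonCrossing τ) (hρτ : ρ ≤ τ)
    (hloc : ∀ x, ∃ (m : ℕ) (e : Fin m → Fin n), StrictMono e ∧ IsNonCrossing (ρ.comap e) ∧
      ∀ y, τ x y → y ∈ Set.range e) :
    IsNonCrossing ρ := by
  intro a b c d hab hbc hcd hac hbd
  have hτab : τ a b := hτ a b c d hab hbc hcd (hρτ hac) (hρτ hbd)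
  obtain ⟨m, e, he, hnc, hrange⟩ := hloc a
  obtain ⟨a', rfl⟩ := hrange _ (τ.refl' _)
  obtain ⟨b', rfl⟩ := hrange _ hτab
  obtain ⟨c', rfl⟩ := hrange _ (hρτ hac)
  obtain ⟨d', rfl⟩ := hrange _ (τ.trans' hτab (hρτ hbd))
  exact hnc a' b' c' d' (he.lt_iff_lt.1 hab) (he.lt_iff_lt.1 hbc) (he.lt_iff_lt.1 hcd) hac hbd

variable {χ : Fin n → Bool} {π σ : Setoid (Fin n)}

theorem mem_BNC_iff : σ ∈ BNC χ ↔ IsNonCrossing (σ.comap (sPerm χ)) := by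
  constructor
  · rintro ⟨τ, hτ, rfl⟩
    convert hτ using 1
    refine Setoid.ext fun a b => ?_
    change τ ((sPerm χ).symm (sPerm χ a)) ((sPerm χ).symm (sPerm χ b)) ↔ τ a b
    simp only [Equiv.symm_apply_apply]
  · refine fun h => ⟨_, h, Setoid.ext fun a b => ?_⟩
    change σ a b ↔ σ (sPerm χ ((sPerm χ).symm a)) (sPerm χ ((sPerm χ).symm b))
    simp only [Equiv.apply_symm_apply]

theorem top_mem_BNC : (⊤ : Setoid (Fin n)) ∈ BNC χ :=
  mem_BNC_iff.2 fun _ _ _ _ _ _ _ _ _ => trivial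

/-- The points of `V`, taken in the spine order of `χ` restricted to `V`, as positions in the
spine order of `χ`. -/
noncomputable def blockSpine (χ : Fin n → Bool) (V : Set (Fin n)) : Fin (blockCard V) → Fin n :=
  fun i => (sPerm χ).symm (enum V (sPerm (fun j => χ (enum V j)) i))

theorem blockSpine_strictMono (V : Set (Fin n)) : StrictMono (blockSpine χ V) := fun i j hij => by
  rwa [blockSpine, blockSpine, lt_iff_spineLT_sPerm (χ := χ), Equiv.apply_symm_apply,
    Equiv.apply_symm_apply, ← spineLT_comp enum_strictMono, ← lt_iff_spineLT_sPerm]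

theorem mem_range_blockSpine {V : Set (Fin n)} {y : Fin n} (hy : sPerm χ y ∈ V) :
    y ∈ Set.range (blockSpine χ V) := by
  obtain ⟨i, hi⟩ := exists_enum_eq hy
  exact ⟨(sPerm fun j => χ (enum V j)).symm i, by simp [blockSpine, hi]⟩

theorem comap_sPerm_comap_enum (V : Set (Fin n)) :
    (σ.comap (enum V)).comap (sPerm fun i => χ (enum V i)) =
      (σ.comap (sPerm χ)).comap (blockSpine χ V) := by
  ext i j
  simp [blockSpine, Setoid.comap_rel]

theorem comap_enum_mem_BNC (hσ : σ ∈ BNC χ) (V : Set (Fin n)) :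
    σ.comap (enum V) ∈ BNC fun i => χ (enum V i) := by
  rw [mem_BNC_iff, comap_sPerm_comap_enum]
  exact (mem_BNC_iff.1 hσ).comap (blockSpine_strictMono V)

theorem mem_BNC_of_forall_comap_enum_mem (hπ : π ∈ BNC χ) (hσ : σ ≤ π)
    (h : ∀ V ∈ π.classes, σ.comap (enum V) ∈ BNC fun i => χ (enum V i)) : σ ∈ BNC χ := by
  refine mem_BNC_iff.2 ((mem_BNC_iff.1 hπ).of_local (fun _ _ hxy => hσ hxy) fun x => ?_)
  refine ⟨_, blockSpine χ {z | π z (sPerm χ x)}, blockSpine_strictMono _, ?_, fun y hxy => ?_⟩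
  · rw [← comap_sPerm_comap_enum, ← mem_BNC_iff]
    exact h _ (π.mem_classes _)
  · exact mem_range_blockSpine (π.symm' hxy)

end NonCrossing

section Interval

variable {χ : Fin n → Bool} {π σ : Setoid (Fin n)}

theorem sum_Icc_BNC_prod_comap_enum {M : Type*} [CommSemiring M] (hπ : π ∈ BNC χ) (hσ : σ ≤ π)
    (G : ∀ V : Set (Fin n), Setoid (Fin (blockCard V)) → M) :
    ∑ ρ with ρ ∈ BNC χ ∧ σ ≤ ρ ∧ ρ ≤ π, ∏ᶠ V ∈ π.classes, G V (ρ.comap (enum V)) =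
      ∏ᶠ V ∈ π.classes,
        ∑ τ with τ ∈ BNC (fun i => χ (enum V i)) ∧ σ.comap (enum V) ≤ τ, G V τ := by
  simp only [finprod_mem_classes_eq_prod, Finset.prod_univ_sum]
  refine Finset.sum_nbij' (fun ρ V => ρ.comap (enum V.1)) (glueBlocks π) ?_ ?_ ?_ ?_
    fun _ _ => rfl
  · simp only [Finset.mem_filter, Finset.mem_univ, true_and, Fintype.mem_piFinset]
    exact fun ρ ⟨hρ, hσρ, _⟩ V => ⟨comap_enum_mem_BNC hρ V, fun _ _ h => hσρ h⟩
  · simp only [Finset.mem_filter, Finset.mem_univ, true_and, Fintype.mem_piFinset]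
    refine fun p hp => ⟨?_, (le_iff_forall_comap_enum_le hσ).2 fun V hV => ?_, glueBlocks_le⟩
    · refine mem_BNC_of_forall_comap_enum_mem hπ glueBlocks_le fun V hV => ?_
      rw [comap_enum_glueBlocks ⟨V, hV⟩]
      exact (hp ⟨V, hV⟩).1
    · rw [comap_enum_glueBlocks ⟨V, hV⟩]
      exact (hp ⟨V, hV⟩).2
  · simp only [Finset.mem_filter, Finset.mem_univ, true_and]
    exact fun ρ ⟨_, _, hρπ⟩ => eq_of_forall_comap_enum_eq glueBlocks_le hρπ
      fun V hV => comap_enum_glueBlocks ⟨V, hV⟩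
  · exact fun p _ => funext fun V => comap_enum_glueBlocks V

end Interval

section Moebius

variable {χ : Fin n → Bool} {π σ : Setoid (Fin n)}

theorem mu_eq_finprod_comap_enum
    (μ : ∀ m : ℕ, (Fin m → Bool) → Setoid (Fin m) → Setoid (Fin m) → ℂ)
    (hμ : ∀ (m : ℕ) (χ : Fin m → Bool), ∀ π ∈ BNC χ, ∀ σ ∈ BNC χ,
      (∑ᶠ ρ ∈ {ρ | ρ ∈ BNC χ ∧ π ≤ ρ ∧ ρ ≤ σ}, μ m χ ρ σ) = if π = σ then 1 else 0)
    (hπ : π ∈ BNC χ) (hσ : σ ∈ BNC χ) (hσπ : σ ≤ π) :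
    μ n χ σ π =
      ∏ᶠ V ∈ π.classes, μ (blockCard V) (fun i => χ (enum V i)) (σ.comap (enum V)) ⊤ := by
  refine eq_of_forall_sum_Icc_eq (S := BNC χ) (f := fun ρ => μ n χ ρ π)
    (g := fun ρ => ∏ᶠ V ∈ π.classes,
      μ (blockCard V) (fun i => χ (enum V i)) (ρ.comap (enum V)) ⊤) (fun ρ hρ hρπ => ?_) hσ hσπ
  have hblock : ∀ V : Set (Fin n),
      ∑ τ with τ ∈ BNC (fun i => χ (enum V i)) ∧ ρ.comap (enum V) ≤ τ,
        μ (blockCard V) (fun i => χ (enum V i)) τ ⊤ = if ρ.comap (enum V) = ⊤ then 1 else 0 := by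
    intro V
    rw [← hμ _ _ _ (comap_enum_mem_BNC hρ V) ⊤ top_mem_BNC, finsum_mem_setOf_eq_sum_filter]
    simp only [le_top, and_true]
  rw [sum_Icc_BNC_prod_comap_enum hπ hρπ fun V τ => μ (blockCard V) (fun i => χ (enum V i)) τ ⊤,
    ← finsum_mem_setOf_eq_sum_filter, hμ n χ ρ hρ π hπ, finprod_mem_congr rfl fun V _ => hblock V,
    finprod_mem_classes_eq_prod, Fintype.prod_boole, eq_iff_forall_comap_enum_eq_top hρπ]
  simp only [Subtype.forall]
  congr 1

end Moebius

section Cumulants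

variable {A : Type*} [Ring A] [Algebra ℂ A] (φ : A →ₗ[ℂ] ℂ)
  (μ : ∀ m : ℕ, (Fin m → Bool) → Setoid (Fin m) → Setoid (Fin m) → ℂ) {χ : Fin n → Bool}

theorem phiP_top (hφ : φ 1 = 1) (T : Fin n → A) :
    phiP φ (⊤ : Setoid (Fin n)) T = φ (List.ofFn T).prod := by
  obtain rfl | hn := Nat.eq_zero_or_pos n
  · have hclasses : (⊤ : Setoid (Fin 0)).classes = ∅ :=
      Set.eq_empty_of_forall_notMem fun _ ⟨y, _⟩ => y.elim0
    rw [phiP, hclasses, finprod_mem_empty, List.ofFn_zero, List.prod_nil, hφ]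
  · have hclasses : (⊤ : Setoid (Fin n)).classes = {Set.univ} := by
      refine Set.eq_singleton_iff_unique_mem.2
        ⟨⟨⟨0, hn⟩, Set.eq_univ_of_forall fun _ => trivial⟩, ?_⟩
      rintro _ ⟨y, rfl⟩
      exact Set.eq_univ_of_forall fun _ => trivial
    rw [phiP, hclasses, finprod_mem_singleton, ofFn_comp_enum_eq strictMono_id Set.range_id]
    rfl

theorem kappaP_eq_finprod_kappaP_top
    (hμ : ∀ (m : ℕ) (χ : Fin m → Bool), ∀ π ∈ BNC χ, ∀ σ ∈ BNC χ,
      (∑ᶠ ρ ∈ {ρ | ρ ∈ BNC χ ∧ π ≤ ρ ∧ ρ ≤ σ}, μ m χ ρ σ) = if π = σ then 1 else 0)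
    {π : Setoid (Fin n)} (hπ : π ∈ BNC χ) (T : Fin n → A) :
    kappaP φ μ χ π T = ∏ᶠ V ∈ π.classes,
      kappaP φ μ (fun i => χ (enum V i)) ⊤ (fun i => T (enum V i)) := by
  have hbot : ∀ (V : Set (Fin n)) (τ : Setoid (Fin (blockCard V))),
      (⊥ : Setoid _).comap (enum V) ≤ τ :=
    fun V τ i j (hij : enum V i = enum V j) => enum_injective hij ▸ τ.refl' i
  calc kappaP φ μ χ π T
      = ∑ σ with σ ∈ BNC χ ∧ ⊥ ≤ σ ∧ σ ≤ π, ∏ᶠ V ∈ π.classes,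
          phiP φ (σ.comap (enum V)) (fun i => T (enum V i)) *
            μ (blockCard V) (fun i => χ (enum V i)) (σ.comap (enum V)) ⊤ := by
        simp only [kappaP, finsum_mem_setOf_eq_sum_filter, bot_le, true_and]
        refine Finset.sum_congr rfl fun σ hσ => ?_
        rw [Finset.mem_filter] at hσ
        rw [phiP_eq_finprod_comap_enum φ hσ.2.2, mu_eq_finprod_comap_enum μ hμ hπ hσ.2.1 hσ.2.2,
          finprod_mem_mul_distrib (Set.toFinite _)]
    _ = ∏ᶠ V ∈ π.classes, kappaP φ μ (fun i => χ (enum V i)) ⊤ (fun i => T (enum V i)) := by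
        rw [sum_Icc_BNC_prod_comap_enum hπ bot_le fun V τ =>
          phiP φ τ (fun i => T (enum V i)) * μ (blockCard V) (fun i => χ (enum V i)) τ ⊤]
        simp only [kappaP, finsum_mem_setOf_eq_sum_filter, hbot, le_top, and_true]

theorem moment_eq_sum_kappaP (hφ : φ 1 = 1)
    (hμ : ∀ (m : ℕ) (χ : Fin m → Bool), ∀ π ∈ BNC χ, ∀ σ ∈ BNC χ,
      (∑ᶠ ρ ∈ {ρ | ρ ∈ BNC χ ∧ π ≤ ρ ∧ ρ ≤ σ}, μ m χ π ρ) = if π = σ then 1 else 0)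
    (T : Fin n → A) : φ (List.ofFn T).prod = ∑ᶠ π ∈ BNC χ, kappaP φ μ χ π T := by
  have hinner : ∀ σ ∈ BNC χ,
      ∑ π with π ∈ BNC χ ∧ σ ≤ π, μ n χ σ π = if σ = ⊤ then 1 else 0 := fun σ hσ => by
    rw [← hμ n χ σ hσ ⊤ top_mem_BNC, finsum_mem_setOf_eq_sum_filter]
    simp only [le_top, and_true]
  rw [← phiP_top φ hφ, ← Set.ofPred_mem_eq (s := BNC χ), finsum_mem_setOf_eq_sum_filter]
  simp only [kappaP, finsum_mem_setOf_eq_sum_filter]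
  rw [Finset.sum_comm' (t' := {σ | σ ∈ BNC χ}) (s' := fun σ => {π | π ∈ BNC χ ∧ σ ≤ π})
    (by simp only [Finset.mem_filter, Finset.mem_univ, true_and]; tauto)]
  rw [Finset.sum_congr rfl fun σ hσ => by
      rw [← Finset.mul_sum, hinner σ (Finset.mem_filter.1 hσ).2, mul_ite, mul_one, mul_zero],
    Finset.sum_ite_eq' _ _ fun σ => phiP φ σ T, if_pos (by simpa using top_mem_BNC)]

end Cumulants

/-- With `κ_π` defined by Möbius inversion from the moments, the cumulant functional
factors over the blocks of `π`:
`κ_π(T_1,…,T_n) = Π_{V ∈ π} κ_{π|_V}(T|_V)` (the restriction of `π` to a block being the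
one-block partition `⊤`), and moreover `φ(T_1⋯T_n) = Σ_{π ∈ BNC(χ)} κ_π(T_1,…,T_n)`. -/
theorem kappaP_factors_and_moment_formula (A : Type*) [Ring A] [Algebra ℂ A]
    (φ : A →ₗ[ℂ] ℂ) (hφ : φ 1 = 1)
    (μ : ∀ m : ℕ, (Fin m → Bool) → Setoid (Fin m) → Setoid (Fin m) → ℂ)
    (hμ1 : ∀ (m : ℕ) (χ : Fin m → Bool), ∀ π ∈ BNC χ, ∀ σ ∈ BNC χ,
      (∑ᶠ ρ ∈ {ρ | ρ ∈ BNC χ ∧ π ≤ ρ ∧ ρ ≤ σ}, μ m χ π ρ) = if π = σ then 1 else 0)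
    (hμ2 : ∀ (m : ℕ) (χ : Fin m → Bool), ∀ π ∈ BNC χ, ∀ σ ∈ BNC χ,
      (∑ᶠ ρ ∈ {ρ | ρ ∈ BNC χ ∧ π ≤ ρ ∧ ρ ≤ σ}, μ m χ ρ σ) = if π = σ then 1 else 0)
    (n : ℕ) (χ : Fin n → Bool) :
    (∀ π ∈ BNC χ, ∀ T : Fin n → A,
      kappaP φ μ χ π T = ∏ᶠ V ∈ Setoid.classes π,
        kappaP φ μ (fun i => χ (enum V i)) (⊤ : Setoid (Fin (blockCard V)))
          (fun i => T (enum V i))) ∧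
    (∀ T : Fin n → A,
      φ (List.ofFn T).prod = ∑ᶠ π ∈ BNC χ, kappaP φ μ χ π T) :=
  ⟨fun _ hπ T => kappaP_eq_finprod_kappaP_top φ μ hμ2 hπ T,
    fun T => moment_eq_sum_kappaP φ μ hφ hμ1 T⟩
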